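/- Let n ≥ 3, let i, j ∈ {1,…,n−1} with |i−j| = 1, let a ≥ 1, and set B_{ij} = σ_i + σ_j − (q−1) in the singular Hecke algebra H(SB_n). Then B_{ij} τ_i^a = τ_j^a B_{ij}. -/

import Mathlib

noncomputable section
open scoped Classical

/-- `𝕂 = ℂ(q)`. -/
abbrev K : Type := RatFunc ℂ
/-- `𝕂(z)`. -/
abbrev Kz : Type := RatFunc K
/-- the variable `q`. -/
def q : K := RatFunc.X
/-- the variable `z`. -/
def z : Kz := RatFunc.X

/-- Generators of the singular braid monoid on `n` strands:
`s i` is `σ_{i+1}`, `si i` is `σ_{i+1}⁻¹`, `t i` is `τ_{i+1}` (0-indexed `i`). -/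
inductive SBGen (n : ℕ) : Type
  | s (i : Fin (n - 1))
  | si (i : Fin (n - 1))
  | t (i : Fin (n - 1))

/-- `|i - j| = 1`. -/
def adj {n : ℕ} (i j : Fin (n - 1)) : Prop := (i : ℕ) + 1 = (j : ℕ) ∨ (j : ℕ) + 1 = (i : ℕ)
/-- `|i - j| ≥ 2`. -/
def far {n : ℕ} (i j : Fin (n - 1)) : Prop := (i : ℕ) + 2 ≤ (j : ℕ) ∨ (j : ℕ) + 2 ≤ (i : ℕ)

open FreeMonoid in
/-- The defining relations of the singular braid monoid. -/
inductive SBRel (n : ℕ) : FreeMonoid (SBGen n) → FreeMonoid (SBGen n) → Prop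
  | inv_right (i) : SBRel n (of (.s i) * of (.si i)) 1
  | inv_left (i) : SBRel n (of (.si i) * of (.s i)) 1
  | sigma_tau (i) : SBRel n (of (.s i) * of (.t i)) (of (.t i) * of (.s i))
  | braid (i j) : adj i j →
      SBRel n (of (.s i) * of (.s j) * of (.s i)) (of (.s j) * of (.s i) * of (.s j))
  | braid_tau (i j) : adj i j →
      SBRel n (of (.s i) * of (.s j) * of (.t i)) (of (.t j) * of (.s i) * of (.s j))
  | ss_comm (i j) : far i j → SBRel n (of (.s i) * of (.s j)) (of (.s j) * of (.s i))
  | st_comm (i j) : far i j → SBRel n (of (.s i) * of (.t j)) (of (.t j) * of (.s i))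
  | tt_comm (i j) : far i j → SBRel n (of (.t i) * of (.t j)) (of (.t j) * of (.t i))

/-- The congruence generated by the singular braid relations. -/
def SBcon (n : ℕ) : Con (FreeMonoid (SBGen n)) := conGen (SBRel n)

/-- The singular braid monoid `SB_n`. -/
def SB (n : ℕ) : Type := (SBcon n).Quotient

instance (n : ℕ) : Monoid (SB n) := Con.monoid _

/-- The generator `σ_{i+1}` of `SB_n`. -/
def sσ {n : ℕ} (i : Fin (n - 1)) : SB n := (SBcon n).mk' (FreeMonoid.of (.s i))
/-- The generator `σ_{i+1}⁻¹` of `SB_n`. -/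
def sσi {n : ℕ} (i : Fin (n - 1)) : SB n := (SBcon n).mk' (FreeMonoid.of (.si i))
/-- The generator `τ_{i+1}` of `SB_n`. -/
def sτ {n : ℕ} (i : Fin (n - 1)) : SB n := (SBcon n).mk' (FreeMonoid.of (.t i))

/-- Number of singular points of a generator. -/
def genDeg {n : ℕ} : SBGen n → Multiplicative ℕ
  | .t _ => Multiplicative.ofAdd 1
  | _ => 1

/-- Number of singular points of a word. -/
def degF (n : ℕ) : FreeMonoid (SBGen n) →* Multiplicative ℕ := FreeMonoid.lift genDeg

lemma degF_rel {n : ℕ} : SBcon n ≤ Con.ker (degF n) := by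
  refine Con.conGen_le.mpr ?_
  rintro x y h
  rw [Con.ker_rel]
  cases h <;>
    simp [degF, genDeg, mul_comm]

/-- The number of singular points, as a monoid homomorphism. -/
def deg {n : ℕ} : SB n →* Multiplicative ℕ := Con.lift _ (degF n) degF_rel

/-- The number of singular points of a singular braid. -/
def ndeg {n : ℕ} (β : SB n) : ℕ := Multiplicative.toAdd (deg β)

/-- `S_d B_n` : the set of singular braids on `n` strands with `d` singular points. -/
def SdB (d n : ℕ) : Set (SB n) := {β | ndeg β = d}

lemma ndeg_mul {n : ℕ} (α β : SB n) : ndeg (α * β) = ndeg α + ndeg β := by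
  simp [ndeg, map_mul]

lemma ndeg_one {n : ℕ} : ndeg (1 : SB n) = 0 := by simp [ndeg]

lemma ndeg_pow {n : ℕ} (β : SB n) (m : ℕ) : ndeg (β ^ m) = m * ndeg β := by
  induction m with
  | zero => simp [ndeg_one]
  | succ m ih => rw [pow_succ, ndeg_mul, ih]; ring

lemma ndeg_sσ {n : ℕ} (i : Fin (n - 1)) : ndeg (sσ i) = 0 := rfl

lemma ndeg_sσi {n : ℕ} (i : Fin (n - 1)) : ndeg (sσi i) = 0 := by
  rfl

lemma ndeg_sτ {n : ℕ} (i : Fin (n - 1)) : ndeg (sτ i) = 1 := by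
  rfl

lemma mem_SdB {n d : ℕ} {β : SB n} (h : ndeg β = d) : β ∈ SdB d n := h
/-- The monoid algebra `𝕂[SB_n]`. -/
abbrev MA (n : ℕ) : Type := MonoidAlgebra K (SB n)

/-- The Hecke relations `σ_k² = (q-1)σ_k + q`. -/
def hrel (n : ℕ) : MA n → MA n → Prop := fun x y =>
  ∃ i : Fin (n - 1), x = (MonoidAlgebra.of K (SB n) (sσ i)) ^ 2 ∧
    y = (q - 1) • MonoidAlgebra.of K (SB n) (sσ i) + q • 1

/-- The singular Hecke algebra `H(SB_n)`. -/
def H (n : ℕ) : Type := RingQuot (hrel n)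

instance (n : ℕ) : Ring (H n) := inferInstanceAs (Ring (RingQuot (hrel n)))
instance (n : ℕ) : Algebra K (H n) := inferInstanceAs (Algebra K (RingQuot (hrel n)))

/-- The natural map `SB_n → H(SB_n)`. -/
def ιH {n : ℕ} (β : SB n) : H n := RingQuot.mkAlgHom K (hrel n) (MonoidAlgebra.of K (SB n) β)

/-- The image of `σ_{i+1}` in the singular Hecke algebra. -/
def σH {n : ℕ} (i : Fin (n - 1)) : H n := ιH (sσ i)
/-- The image of `τ_{i+1}` in the singular Hecke algebra. -/
def τH {n : ℕ} (i : Fin (n - 1)) : H n := ιH (sτ i)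

/-- Scalars inside the singular Hecke algebra. -/
def cK {n : ℕ} (c : K) : H n := algebraMap K (H n) c

/-- `H(S_d B_n)` : the 𝕂-subspace of `H(SB_n)` spanned by the braids with `d` singular points. -/
def HSd (d n : ℕ) : Submodule K (H n) := Submodule.span K (ιH '' SdB d n)

lemma ιH_mem {n d : ℕ} {β : SB n} (h : β ∈ SdB d n) : ιH β ∈ HSd d n :=
  Submodule.subset_span ⟨β, h, rfl⟩

/-- Map on generators realizing the inclusion `SB_n ↪ SB_{n+1}`. -/
def genMap {n : ℕ} : SBGen n → SBGen (n + 1)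
  | .s i => .s (Fin.castLE (by omega) i)
  | .si i => .si (Fin.castLE (by omega) i)
  | .t i => .t (Fin.castLE (by omega) i)

lemma incl_wd {n : ℕ} :
    SBcon n ≤ Con.ker ((SBcon (n + 1)).mk'.comp (FreeMonoid.map genMap)) := by
  refine Con.conGen_le.mpr ?_
  rintro x y h
  rw [Con.ker_rel]
  cases h with
  | inv_right i => exact (Con.eq _).mpr (ConGen.Rel.of _ _ (SBRel.inv_right _))
  | inv_left i => exact (Con.eq _).mpr (ConGen.Rel.of _ _ (SBRel.inv_left _))
  | sigma_tau i => exact (Con.eq _).mpr (ConGen.Rel.of _ _ (SBRel.sigma_tau _))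
  | braid i j hij =>
      refine (Con.eq _).mpr (ConGen.Rel.of _ _ (SBRel.braid _ _ ?_))
      simpa [adj] using hij
  | braid_tau i j hij =>
      refine (Con.eq _).mpr (ConGen.Rel.of _ _ (SBRel.braid_tau _ _ ?_))
      simpa [adj] using hij
  | ss_comm i j hij =>
      refine (Con.eq _).mpr (ConGen.Rel.of _ _ (SBRel.ss_comm _ _ ?_))
      simpa [far] using hij
  | st_comm i j hij =>
      refine (Con.eq _).mpr (ConGen.Rel.of _ _ (SBRel.st_comm _ _ ?_))
      simpa [far] using hij
  | tt_comm i j hij =>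
      refine (Con.eq _).mpr (ConGen.Rel.of _ _ (SBRel.tt_comm _ _ ?_))
      simpa [far] using hij

/-- The natural monoid homomorphism `SB_n → SB_{n+1}`. -/
def incl {n : ℕ} : SB n →* SB (n + 1) :=
  Con.lift _ ((SBcon (n + 1)).mk'.comp (FreeMonoid.map genMap)) incl_wd

lemma degF_genMap {n : ℕ} (w : FreeMonoid (SBGen n)) :
    degF (n + 1) (FreeMonoid.map genMap w) = degF n w := by
  change ((degF (n+1)).comp (FreeMonoid.map genMap)) w = degF n w
  refine DFunLike.congr_fun (FreeMonoid.hom_eq fun a => ?_) w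
  cases a <;> rfl

lemma ndeg_incl {n : ℕ} (β : SB n) : ndeg (incl β) = ndeg β := by
  induction β using Con.induction_on with
  | H w =>
    show Multiplicative.toAdd (degF (n + 1) (FreeMonoid.map genMap w)) =
      Multiplicative.toAdd (degF n w)
    rw [degF_genMap]

/-- The generator `σ_n` of `SB_{n+2}` (0-indexed `n`), used in the Markov condition. -/
def lastGen (n : ℕ) : Fin ((n + 2) - 1) := ⟨n, by omega⟩

/-- A collection of 𝕂-linear maps `H(S_d B_n) → 𝕂(z)`, `n ≥ 1`
(index `n` in the collection corresponds to `n+1` strands). -/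
abbrev TRc (d : ℕ) : Type := ∀ n : ℕ, HSd d (n + 1) →ₗ[K] Kz

/-- The Markov trace conditions. -/
def IsMarkov (d : ℕ) (T : TRc d) : Prop :=
  (∀ (n k l : ℕ) (α β : SB (n + 1)), α ∈ SdB k (n + 1) → β ∈ SdB l (n + 1) → k + l = d →
    ∀ (h₁ : ιH (α * β) ∈ HSd d (n + 1)) (h₂ : ιH (β * α) ∈ HSd d (n + 1)),
      T n ⟨ιH (α * β), h₁⟩ = T n ⟨ιH (β * α), h₂⟩) ∧
  (∀ (n : ℕ) (β : SB (n + 1)), β ∈ SdB d (n + 1) →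
    ∀ (h₁ : ιH (incl β) ∈ HSd d (n + 2)) (h₂ : ιH β ∈ HSd d (n + 1)),
      T (n + 1) ⟨ιH (incl β), h₁⟩ = T n ⟨ιH β, h₂⟩) ∧
  (∀ (n : ℕ) (β : SB (n + 1)), β ∈ SdB d (n + 1) →
    ∀ (h₁ : ιH (incl β * sσ (lastGen n)) ∈ HSd d (n + 2)) (h₂ : ιH β ∈ HSd d (n + 1)),
      T (n + 1) ⟨ιH (incl β * sσ (lastGen n)), h₁⟩ = z * T n ⟨ιH β, h₂⟩)

/-- `TR_d` : the 𝕂(z)-vector space of Markov traces on `{H(S_d B_n)}ₙ`. -/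
def TR (d : ℕ) : Submodule Kz (TRc d) where
  carrier := {T | IsMarkov d T}
  add_mem' := by
    rintro a b ⟨ha1, ha2, ha3⟩ ⟨hb1, hb2, hb3⟩
    refine ⟨?_, ?_, ?_⟩
    · intro n k l α β hα hβ hkl h₁ h₂
      simp only [Pi.add_apply, LinearMap.add_apply,
        ha1 n k l α β hα hβ hkl h₁ h₂, hb1 n k l α β hα hβ hkl h₁ h₂]
    · intro n β hβ h₁ h₂
      simp only [Pi.add_apply, LinearMap.add_apply, ha2 n β hβ h₁ h₂, hb2 n β hβ h₁ h₂]
    · intro n β hβ h₁ h₂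
      simp only [Pi.add_apply, LinearMap.add_apply, ha3 n β hβ h₁ h₂, hb3 n β hβ h₁ h₂]
      ring
  zero_mem' := by
    refine ⟨?_, ?_, ?_⟩ <;> intros <;> simp
  smul_mem' := by
    rintro c a ⟨ha1, ha2, ha3⟩
    refine ⟨?_, ?_, ?_⟩
    · intro n k l α β hα hβ hkl h₁ h₂
      simp only [Pi.smul_apply, LinearMap.smul_apply, ha1 n k l α β hα hβ hkl h₁ h₂]
    · intro n β hβ h₁ h₂
      simp only [Pi.smul_apply, LinearMap.smul_apply, ha2 n β hβ h₁ h₂]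
    · intro n β hβ h₁ h₂
      simp only [Pi.smul_apply, LinearMap.smul_apply, ha3 n β hβ h₁ h₂, smul_eq_mul]
      ring

lemma ndeg_list_prod {n : ℕ} (l : List (SB n)) : ndeg l.prod = (l.map ndeg).sum := by
  induction l with
  | nil => simpa using ndeg_one
  | cons a l ih => simp [ndeg_mul, ih]

lemma mem_expr {m d : ℕ} (α : Fin (d + 1) → SB m) (hα : ∀ j, α j ∈ SdB 0 m)
    (idx : Fin d → Fin (m - 1)) :
    (α 0 * (List.ofFn fun j : Fin d => sτ (idx j) * α j.succ).prod) ∈ SdB d m := by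
  refine mem_SdB ?_
  rw [ndeg_mul, ndeg_list_prod, List.map_ofFn, hα 0]
  have h : (fun j : Fin d => ndeg (sτ (idx j) * α j.succ)) = fun _ => 1 := by
    funext j; rw [ndeg_mul, ndeg_sτ, hα j.succ]
  rw [show ndeg ∘ (fun j : Fin d => sτ (idx j) * α j.succ)
      = fun j : Fin d => ndeg (sτ (idx j) * α j.succ) from rfl, h]
  simp

lemma mem_exprS {m d : ℕ} (α : Fin (d + 1) → SB m) (hα : ∀ j, α j ∈ SdB 0 m)
    (idx : Fin d → Fin (m - 1)) (S : Finset (Fin d)) :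
    (α 0 * (List.ofFn fun j : Fin d =>
      (if j ∈ S then sσ (idx j) else 1) * α j.succ).prod) ∈ SdB 0 m := by
  refine mem_SdB ?_
  rw [ndeg_mul, ndeg_list_prod, List.map_ofFn, hα 0]
  have h : (fun j : Fin d => ndeg ((if j ∈ S then sσ (idx j) else 1) * α j.succ))
      = fun _ => 0 := by
    funext j
    rw [ndeg_mul, hα j.succ]
    split <;> simp [ndeg_sσ, ndeg_one]
  rw [show ndeg ∘ (fun j : Fin d => (if j ∈ S then sσ (idx j) else 1) * α j.succ)
      = fun j : Fin d => ndeg ((if j ∈ S then sσ (idx j) else 1) * α j.succ) from rfl, h]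
  simp

lemma mem_tau_pow {n : ℕ} (i : Fin (n - 1)) (d : ℕ) : (sτ i) ^ d ∈ SdB d n := by
  refine mem_SdB ?_; simp [ndeg_pow, ndeg_sτ]

lemma mem_tau_pow_sigma {n : ℕ} (i i' : Fin (n - 1)) (d : ℕ) :
    (sτ i) ^ d * sσ i' ∈ SdB d n := by
  refine mem_SdB ?_; simp [ndeg_mul, ndeg_pow, ndeg_sτ, ndeg_sσ]

lemma mem_tau_tau {n : ℕ} (i i' : Fin (n - 1)) (a b : ℕ) :
    (sτ i) ^ a * (sτ i') ^ b ∈ SdB (a + b) n := by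
  refine mem_SdB ?_; simp [ndeg_mul, ndeg_pow, ndeg_sτ]

lemma mem_tau_tau_sigma {n : ℕ} (i i' i'' : Fin (n - 1)) (a b : ℕ) :
    (sτ i) ^ a * (sτ i') ^ b * sσ i'' ∈ SdB (a + b) n := by
  refine mem_SdB ?_; simp [ndeg_mul, ndeg_pow, ndeg_sτ, ndeg_sσ]

/-- `σ_{i+1}` with out-of-range indices interpreted as `1`. -/
def sσ' (n : ℕ) (i : ℕ) : SB n := if h : i < n - 1 then sσ ⟨i, h⟩ else 1

/-- `descChain n m = σ_{n-1} σ_{n-2} ⋯ σ_{n-m}` (1-indexed), `m` letters. -/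
def descChain (n : ℕ) : ℕ → SB n
  | 0 => 1
  | m + 1 => descChain n m * sσ' n (n - 2 - m)

/-- The sets `ℬ_n` describing the standard basis of the Hecke algebra `H(B_n)`:
`ℬ_1 = {1}` and `ℬ_n = {β u : β ∈ ℬ_{n-1}, u ∈ U_n}` where
`U_n = {1, σ_{n-1}, σ_{n-1}σ_{n-2}, …, σ_{n-1}⋯σ_1}`. -/
def Bset : (n : ℕ) → Set (SB n)
  | 0 => {1}
  | n + 1 => {x | ∃ β ∈ Bset n, ∃ m ≤ n, x = incl β * descChain (n + 1) m}

/-- The set `𝒞_{d,n}` of singular braids of the form `τ_{i_1} ⋯ τ_{i_d} β` with `β ∈ ℬ_n`. -/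
def Cdn (d n : ℕ) : Set (SB n) :=
  {x | ∃ idx : Fin d → Fin (n - 1), ∃ β ∈ Bset n,
    x = (List.ofFn fun j : Fin d => sτ (idx j)).prod * β}

/-!
Write `U = σ_i`, `V = σ_j`, `B = U + V - (q - 1)`. The relations `σ_i σ_j τ_i = τ_j σ_i σ_j` and
`σ_j σ_i τ_j = τ_i σ_j σ_i` show that `V U U V` commutes with `τ_i`, and the quadratic Hecke
relation rewrites `V U U V` as `(q - 1) V U B + q²`. As `q - 1` is invertible, `V U B` commutes
with `τ_i`, so `V U (B τ_i) = τ_i V U B = V U (τ_j B)`; cancelling the unit `V U` gives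
`B τ_i = τ_j B`, and the powers follow by induction.
-/

section HeckeQuadratic

variable {R A : Type*} [Ring A]

theorem commute_of_commute_smul_add_algebraMap [Field R] [Algebra R A] {c e : R} (hc : c ≠ 0)
    {x y : A} (h : Commute (c • x + algebraMap R A e) y) : Commute x y := by
  have hcx : Commute (c • x) y := by
    simpa using h.sub_left (Algebra.commute_algebraMap_left e y)
  simpa [smul_smul, inv_mul_cancel₀ hc] using hcx.smul_left c⁻¹

theorem mul_mul_eq_of_mul_self_eq [CommRing R] [Algebra R A] {c d : R} {u v : A}
    (hu : u * u = c • u + algebraMap R A d) (hv : v * v = c • v + algebraMap R A d) :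
    v * u * (u * v) = c • (v * u * (u + v - algebraMap R A c)) + algebraMap R A (d * d) := by
  have huB : u * (u + v - algebraMap R A c) = algebraMap R A d + u * v := by
    rw [mul_sub, mul_add, hu, ← Algebra.commutes, ← Algebra.smul_def]
    abel
  calc v * u * (u * v) = v * (u * u) * v := by simp only [mul_assoc]
    _ = c • (v * (algebraMap R A d + u * v)) + algebraMap R A (d * d) := by
      rw [hu]
      simp only [Algebra.algebraMap_eq_smul_one, add_mul, mul_add, smul_mul_assoc, mul_smul_comm,
        mul_one, mul_assoc, hv, smul_add, smul_smul]
      module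
    _ = _ := by rw [mul_assoc v u, huB]

theorem semiconjBy_add_sub_algebraMap [Field R] [Algebra R A] {c d : R} (hc : c ≠ 0)
    {u v s t : A} (hu : u * u = c • u + algebraMap R A d) (hv : v * v = c • v + algebraMap R A d)
    (hvu : IsUnit (v * u)) (huv_s : u * v * s = t * (u * v)) (hvu_t : v * u * t = s * (v * u)) :
    SemiconjBy (u + v - algebraMap R A c) s t := by
  have hW : Commute (v * u * (u * v)) s := SemiconjBy.mul_left hvu_t huv_s
  rw [mul_mul_eq_of_mul_self_eq hu hv] at hW
  have hX : Commute (v * u * (u + v - algebraMap R A c)) s :=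
    commute_of_commute_smul_add_algebraMap hc hW
  apply hvu.mul_left_cancel
  calc v * u * ((u + v - algebraMap R A c) * s) = s * (v * u * (u + v - algebraMap R A c)) := by
        rw [← mul_assoc]; exact hX.eq
    _ = v * u * (t * (u + v - algebraMap R A c)) := by rw [← mul_assoc, ← hvu_t, mul_assoc]

end HeckeQuadratic

def ιHom (n : ℕ) : SB n →* H n :=
  (RingQuot.mkAlgHom K (hrel n)).toMonoidHom.comp (MonoidAlgebra.of K (SB n))

theorem SBcon_mk'_eq_of_rel {n : ℕ} {x y : FreeMonoid (SBGen n)} (h : SBRel n x y) :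
    (SBcon n).mk' x = (SBcon n).mk' y :=
  (Con.eq _).2 (ConGen.Rel.of _ _ h)

theorem isUnit_sσ {n : ℕ} (i : Fin (n - 1)) : IsUnit (sσ i) :=
  isUnit_iff_exists.2
    ⟨sσi i, SBcon_mk'_eq_of_rel (.inv_right i), SBcon_mk'_eq_of_rel (.inv_left i)⟩

theorem isUnit_σH {n : ℕ} (i : Fin (n - 1)) : IsUnit (σH i) :=
  (isUnit_sσ i).map (ιHom n)

theorem σH_mul_self {n : ℕ} (i : Fin (n - 1)) :
    σH i * σH i = (q - 1) • σH i + algebraMap K (H n) q := by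
  have h := RingQuot.mkAlgHom_rel K (show hrel n _ _ from ⟨i, rfl, rfl⟩)
  rwa [map_pow, map_add, map_smul, map_smul, map_one, ← Algebra.algebraMap_eq_smul_one, sq] at h

theorem σH_mul_σH_mul_τH {n : ℕ} {i j : Fin (n - 1)} (hij : adj i j) :
    σH i * σH j * τH i = τH j * (σH i * σH j) := by
  have h : sσ i * sσ j * sτ i = sτ j * sσ i * sσ j := SBcon_mk'_eq_of_rel (.braid_tau i j hij)
  have h' := congrArg (ιHom n) h
  rw [map_mul, map_mul, map_mul, map_mul, mul_assoc (ιHom n (sτ j))] at h'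
  exact h'

theorem q_sub_one_ne_zero : q - 1 ≠ 0 := by
  intro h
  simpa [q] using congrArg RatFunc.intDegree (sub_eq_zero.1 h)

theorem statement10_general (n : ℕ) (i j : Fin (n - 1)) (hij : adj i j)
    (a : ℕ) :
    (σH i + σH j - cK (q - 1)) * τH i ^ a = τH j ^ a * (σH i + σH j - cK (q - 1)) :=
  (semiconjBy_add_sub_algebraMap q_sub_one_ne_zero (σH_mul_self i) (σH_mul_self j)
    ((isUnit_σH j).mul (isUnit_σH i)) (σH_mul_σH_mul_τH hij)
    (σH_mul_σH_mul_τH hij.symm)).pow_right a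

/-- For `|i-j| = 1` and `a ≥ 1`, with `B_{ij} = σ_i + σ_j − (q−1)` in
`H(SB_n)`, one has `B_{ij} τ_i^a = τ_j^a B_{ij}`. -/
theorem statement10 (n : ℕ) (hn : 3 ≤ n) (i j : Fin (n - 1)) (hij : adj i j)
    (a : ℕ) (ha : 1 ≤ a) :
    (σH i + σH j - cK (q - 1)) * τH i ^ a = τH j ^ a * (σH i + σH j - cK (q - 1)) :=
  statement10_general n i j hij a
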